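/- arXiv:2604.01552 — 6 statements merged into one kernel-verified Lean document; each statement's English description precedes it below -/
import Mathlib

section
/- Let Δ > 0, M₂ > 0, s ∈ ℝ, and let Alg : ℝ × ℝ → ℝ be any function. Then there exists a twice continuously differentiable function φ : ℝ → ℝ with |φ''(u)| ≤ M₂ for all u ∈ ℝ such that |Alg(φ(s), φ(s+Δ)) − φ(s−Δ)| ≥ M₂·Δ². -/
/-- The witness quadratic `u ↦ k (u-s)² - kΔ (u-s)`. -/
noncomputable def leCamWitness (k s Δ : ℝ) : ℝ → ℝ :=
  fun u => k * (u - s) ^ 2 - k * Δ * (u - s)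

lemma leCamWitness_contDiff (k s Δ : ℝ) : ContDiff ℝ 2 (leCamWitness k s Δ) := by
  unfold leCamWitness
  exact ((contDiff_const.mul ((contDiff_id.sub contDiff_const).pow 2)).sub
    (contDiff_const.mul (contDiff_id.sub contDiff_const)))

lemma leCamWitness_deriv (k s Δ : ℝ) :
    deriv (leCamWitness k s Δ) = fun u => 2 * k * (u - s) - k * Δ := by
  funext u
  have h1 : HasDerivAt (fun u : ℝ => u - s) 1 u := (hasDerivAt_id u).sub_const s
  have h : HasDerivAt (leCamWitness k s Δ) (2 * k * (u - s) - k * Δ) u := by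
    have h2 := (h1.pow 2).const_mul k
    have h3 := h1.const_mul (k * Δ)
    have := h2.sub h3
    refine this.congr_deriv ?_
    push_cast
    ring
  exact h.deriv

lemma leCamWitness_deriv2 (k s Δ : ℝ) (u : ℝ) :
    deriv (deriv (leCamWitness k s Δ)) u = 2 * k := by
  rw [leCamWitness_deriv]
  have h1 : HasDerivAt (fun u : ℝ => u - s) 1 u := (hasDerivAt_id u).sub_const s
  have h : HasDerivAt (fun u => 2 * k * (u - s) - k * Δ) (2 * k) u := by
    have := (h1.const_mul (2 * k)).sub_const (k * Δ)
    refine this.congr_deriv ?_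
    ring
  exact h.deriv

/-- Two-point lower bound (Le Cam's method): for any estimator `Alg` of `φ(s-Δ)` from
the two values `(φ(s), φ(s+Δ))`, there is a `C²` function `φ` with `|φ''| ≤ M₂`
everywhere on which the estimator errs by at least `M₂·Δ²`. -/
theorem two_point_lower_bound
    (Δ M₂ s : ℝ) (hΔ : 0 < Δ) (hM₂ : 0 < M₂)
    (Alg : ℝ × ℝ → ℝ) :
    ∃ φ : ℝ → ℝ, ContDiff ℝ 2 φ ∧ (∀ u : ℝ, |deriv (deriv φ) u| ≤ M₂) ∧
      M₂ * Δ ^ 2 ≤ |Alg (φ s, φ (s + Δ)) - φ (s - Δ)| := by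
  set a := Alg (0, 0) with ha
  have key : ∀ k : ℝ, |2 * k| ≤ M₂ →
      ∃ φ : ℝ → ℝ, ContDiff ℝ 2 φ ∧ (∀ u : ℝ, |deriv (deriv φ) u| ≤ M₂) ∧
        φ s = 0 ∧ φ (s + Δ) = 0 ∧ φ (s - Δ) = 2 * k * Δ ^ 2 := by
    intro k hk
    refine ⟨leCamWitness k s Δ, leCamWitness_contDiff k s Δ, fun u => by
      rw [leCamWitness_deriv2]; exact hk, ?_, ?_, ?_⟩ <;>
      simp [leCamWitness] <;> ring
  rcases le_or_gt 0 a with h | h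
  · obtain ⟨φ, h1, h2, h3, h4, h5⟩ := key (-(M₂ / 2)) (by rw [abs_of_nonpos] <;> nlinarith)
    refine ⟨φ, h1, h2, ?_⟩
    rw [h3, h4, h5, ← ha]
    rw [abs_of_nonneg] <;> nlinarith [mul_pos hM₂ (pow_pos hΔ 2)]
  · obtain ⟨φ, h1, h2, h3, h4, h5⟩ := key (M₂ / 2) (by rw [abs_of_nonneg] <;> nlinarith)
    refine ⟨φ, h1, h2, ?_⟩
    rw [h3, h4, h5, ← ha]
    rw [abs_of_nonpos] <;> nlinarith [mul_pos hM₂ (pow_pos hΔ 2)]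
end

section
/- Let Δ > 0, M₂ > 0, s ∈ ℝ, and let F denote the class of twice continuously differentiable functions φ : ℝ → ℝ with |φ''(u)| ≤ M₂ for all u ∈ ℝ. Then: (i) for every function Alg : ℝ × ℝ → ℝ, sup over φ ∈ F of |Alg(φ(s), φ(s+Δ)) − φ(s−Δ)| is at least M₂·Δ²; and (ii) the estimator Alg₀(a, b) := 2a − b attains sup over φ ∈ F of |Alg₀(φ(s), φ(s+Δ)) − φ(s−Δ)| at most M₂·Δ². Hence the minimax error for estimating φ(s−Δ) from (φ(s), φ(s+Δ)) over F equals M₂·Δ², and it is achieved by the second-order extrapolation 2φ(s) − φ(s+Δ). -/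
/-- Properties of the quadratic `u ↦ c * ((u - s) * (u - (s + Δ)))`. -/
lemma quad_props (c s Δ : ℝ) :
    ContDiff ℝ 2 (fun u : ℝ => c * ((u - s) * (u - (s + Δ)))) ∧
    (∀ u : ℝ, deriv (deriv (fun u : ℝ => c * ((u - s) * (u - (s + Δ))))) u = 2 * c) := by
  set φ : ℝ → ℝ := fun u => c * ((u - s) * (u - (s + Δ))) with hφ
  have h1 : ∀ u : ℝ, HasDerivAt φ (c * (2 * u - 2 * s - Δ)) u := by
    intro u
    have H := (((hasDerivAt_id u).sub_const s).mul
      ((hasDerivAt_id u).sub_const (s + Δ))).const_mul c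
    simp only [id_eq, one_mul, mul_one] at H
    exact H.congr_deriv (by ring)
  have hd1 : deriv φ = fun u => c * (2 * u - 2 * s - Δ) := by
    funext u; exact (h1 u).deriv
  have h2 : ∀ u : ℝ, HasDerivAt (deriv φ) (2 * c) u := by
    intro u
    rw [hd1]
    have H := ((((hasDerivAt_id u).const_mul (2:ℝ)).sub_const (2 * s)).sub_const Δ).const_mul c
    simp only [id_eq, mul_one] at H
    exact H.congr_deriv (by ring)
  constructor
  · have : ContDiff ℝ 2 (fun u : ℝ => (u - s) * (u - (s + Δ))) :=
      (contDiff_id.sub contDiff_const).mul (contDiff_id.sub contDiff_const)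
    exact contDiff_const.mul this
  · intro u; exact (h2 u).deriv

/-- Minimax rate for reconstructing the skipped value `φ(s-Δ)` from `(φ(s), φ(s+Δ))`
over the class `F = {φ ∈ C² : |φ''| ≤ M₂}`:
(i) every estimator has worst-case error at least `M₂·Δ²` over `F`, and
(ii) the second-order extrapolation `Alg₀(a,b) = 2a - b` has worst-case error at most
`M₂·Δ²` over `F`. Hence the minimax error equals `M₂·Δ²` and is achieved by
`2φ(s) - φ(s+Δ)`. -/
theorem minimax_rate_second_order
    (Δ M₂ s : ℝ) (hΔ : 0 < Δ) (hM₂ : 0 < M₂) :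
    (∀ Alg : ℝ × ℝ → ℝ,
        ∃ φ : ℝ → ℝ, ContDiff ℝ 2 φ ∧ (∀ u : ℝ, |deriv (deriv φ) u| ≤ M₂) ∧
          M₂ * Δ ^ 2 ≤ |Alg (φ s, φ (s + Δ)) - φ (s - Δ)|) ∧
    (∀ φ : ℝ → ℝ, ContDiff ℝ 2 φ → (∀ u : ℝ, |deriv (deriv φ) u| ≤ M₂) →
        |(2 * φ s - φ (s + Δ)) - φ (s - Δ)| ≤ M₂ * Δ ^ 2) := by
  constructor
  · -- lower bound
    intro Alg
    have hv : ∀ c : ℝ, (fun u : ℝ => c * ((u - s) * (u - (s + Δ)))) s = 0 ∧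
        (fun u : ℝ => c * ((u - s) * (u - (s + Δ)))) (s + Δ) = 0 ∧
        (fun u : ℝ => c * ((u - s) * (u - (s + Δ)))) (s - Δ) = 2 * c * Δ ^ 2 := by
      intro c
      refine ⟨by simp, by simp, ?_⟩
      simp only
      ring
    set v := Alg (0, 0) with hvdef
    by_cases hvle : v ≤ 0
    · refine ⟨fun u => (M₂ / 2) * ((u - s) * (u - (s + Δ))), (quad_props (M₂ / 2) s Δ).1, ?_, ?_⟩
      · intro u
        rw [(quad_props (M₂ / 2) s Δ).2 u]
        rw [abs_of_nonneg (by linarith)]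
        linarith
      · obtain ⟨e1, e2, e3⟩ := hv (M₂ / 2)
        rw [e1, e2, e3, ← hvdef]
        have h2 : 2 * (M₂ / 2) * Δ ^ 2 = M₂ * Δ ^ 2 := by ring
        rw [h2]
        have hpos : 0 < M₂ * Δ ^ 2 := by positivity
        rw [abs_of_nonpos (by linarith)]
        linarith
    · push_neg at hvle
      refine ⟨fun u => (-(M₂ / 2)) * ((u - s) * (u - (s + Δ))), (quad_props (-(M₂ / 2)) s Δ).1, ?_, ?_⟩
      · intro u
        rw [(quad_props (-(M₂ / 2)) s Δ).2 u]
        rw [show (2 : ℝ) * (-(M₂ / 2)) = -M₂ by ring, abs_neg, abs_of_nonneg hM₂.le]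
      · obtain ⟨e1, e2, e3⟩ := hv (-(M₂ / 2))
        rw [e1, e2, e3, ← hvdef]
        have h2 : 2 * (-(M₂ / 2)) * Δ ^ 2 = -(M₂ * Δ ^ 2) := by ring
        rw [h2]
        have hpos : 0 < M₂ * Δ ^ 2 := by positivity
        rw [abs_of_nonneg (by linarith)]
        linarith
  · -- upper bound
    intro φ hφ hb
    have hφ' : ContDiff ℝ (1 + 1) φ := by norm_num; exact hφ
    have hc1 : ContDiff ℝ 1 (deriv φ) := (contDiff_succ_iff_deriv.mp hφ').2.2
    have hd1 : Differentiable ℝ φ := hφ.differentiable two_ne_zero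
    have hd2 : Differentiable ℝ (deriv φ) := hc1.differentiable one_ne_zero
    have lip : LipschitzWith M₂.toNNReal (deriv φ) := by
      apply lipschitzWith_of_nnnorm_deriv_le hd2
      intro x
      rw [← NNReal.coe_le_coe, coe_nnnorm, Real.norm_eq_abs, Real.coe_toNNReal _ hM₂.le]
      exact hb x
    have key : ∀ a b : ℝ, |deriv φ a - deriv φ b| ≤ M₂ * |a - b| := by
      intro a b
      have := lip.dist_le_mul a b
      rwa [Real.dist_eq, Real.dist_eq, Real.coe_toNNReal _ hM₂.le] at this
    set g : ℝ → ℝ := fun t => φ (s + t) + φ (s - t) - 2 * φ s with hg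
    have hG : ∀ t : ℝ, HasDerivAt g (deriv φ (s + t) - deriv φ (s - t)) t := by
      intro t
      have h1 : HasDerivAt (fun t : ℝ => φ (s + t)) (deriv φ (s + t) * 1) t :=
        HasDerivAt.comp t (hd1 (s + t)).hasDerivAt ((hasDerivAt_id t).const_add s)
      have h2 : HasDerivAt (fun t : ℝ => φ (s - t)) (deriv φ (s - t) * (-1)) t :=
        HasDerivAt.comp t (hd1 (s - t)).hasDerivAt ((hasDerivAt_id t).const_sub s)
      have := (h1.add h2).sub_const (2 * φ s)
      exact this.congr_deriv (by ring)
    have hGc : Continuous fun t : ℝ => deriv φ (s + t) - deriv φ (s - t) :=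
      (hc1.continuous.comp (continuous_const.add continuous_id)).sub
        (hc1.continuous.comp (continuous_const.sub continuous_id))
    have ftc : ∫ t in (0:ℝ)..Δ, (deriv φ (s + t) - deriv φ (s - t)) = g Δ - g 0 :=
      intervalIntegral.integral_eq_sub_of_hasDerivAt (fun t _ => hG t)
        (hGc.intervalIntegrable 0 Δ)
    have hg0 : g 0 = 0 := by simp [hg]; ring
    have hbound : |g Δ| ≤ M₂ * Δ ^ 2 := by
      rw [show g Δ = g Δ - g 0 by rw [hg0]; ring, ← ftc]
      have h1 : |∫ t in (0:ℝ)..Δ, (deriv φ (s + t) - deriv φ (s - t))| ≤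
          ∫ t in (0:ℝ)..Δ, M₂ * (2 * t) := by
        rw [← Real.norm_eq_abs]
        refine le_trans (intervalIntegral.norm_integral_le_integral_norm hΔ.le) ?_
        apply intervalIntegral.integral_mono_on hΔ.le
          (hGc.norm.intervalIntegrable 0 Δ)
          (by apply Continuous.intervalIntegrable; continuity)
        intro t ht
        have := key (s + t) (s - t)
        rw [show s + t - (s - t) = 2 * t by ring,
          abs_of_nonneg (by linarith [ht.1] : (0:ℝ) ≤ 2 * t)] at this
        rwa [Real.norm_eq_abs]
      have h2 : ∫ t in (0:ℝ)..Δ, M₂ * (2 * t) = M₂ * Δ ^ 2 := by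
        rw [intervalIntegral.integral_const_mul]
        rw [show (fun t : ℝ => 2 * t) = fun t : ℝ => (2:ℝ) * t from rfl,
          intervalIntegral.integral_const_mul, integral_id]
        ring
      rw [h2] at h1
      exact h1
    have heq : (2 * φ s - φ (s + Δ)) - φ (s - Δ) = -(g Δ) := by simp [hg]; ring
    rw [heq, abs_neg]
    exact hbound
end

section
/- Let Δ > 0, M₁ > 0, s ∈ ℝ, and let Alg : ℝ → ℝ be any function. Then there exists a continuously differentiable function φ : ℝ → ℝ with |φ'(u)| ≤ M₁ for all u ∈ ℝ such that |Alg(φ(s)) − φ(s−Δ)| ≥ M₁·Δ. -/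
/-! The affine functions `u ↦ ±M₁ (s - u)` both vanish at the observation point `s`, so `Alg`
returns the same value on both, while their values at `s - Δ` are `±M₁Δ`, at distance `2 |M₁ Δ|`.
A single number cannot be within less than half that distance of both. -/

lemma half_dist_le_dist_or_half_dist_le_dist {α : Type*} [PseudoMetricSpace α] (a x y : α) :
    dist x y / 2 ≤ dist a x ∨ dist x y / 2 ≤ dist a y := by
  by_contra! h
  linarith [dist_triangle_left x y a]

lemma exists_sign_le_abs_sub_mul (a b : ℝ) : ∃ ε : ℝ, |ε| = 1 ∧ |b| ≤ |a - ε * b| := by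
  have hdist : dist b (-b) / 2 = |b| := by
    rw [Real.dist_eq, sub_neg_eq_add, ← two_mul, abs_mul, abs_two]
    ring
  rcases half_dist_le_dist_or_half_dist_le_dist a b (-b) with h | h <;> rw [hdist] at h
  · exact ⟨1, abs_one, by simpa [Real.dist_eq] using h⟩
  · exact ⟨-1, by simp, by simpa [Real.dist_eq] using h⟩

theorem one_point_lower_bound_general
    (Δ M₁ s : ℝ) (hM₁ : 0 < M₁)
    (Alg : ℝ → ℝ) :
    ∃ φ : ℝ → ℝ, ContDiff ℝ 1 φ ∧ (∀ u : ℝ, |deriv φ u| ≤ M₁) ∧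
      M₁ * Δ ≤ |Alg (φ s) - φ (s - Δ)| := by
  obtain ⟨ε, hε, hfar⟩ := exists_sign_le_abs_sub_mul (Alg 0) (M₁ * Δ)
  refine ⟨fun u => ε * M₁ * (s - u), by fun_prop, fun u => ?_, ?_⟩
  · simp [abs_mul, hε, abs_of_pos hM₁]
  · calc M₁ * Δ ≤ |M₁ * Δ| := le_abs_self _
      _ ≤ |Alg 0 - ε * (M₁ * Δ)| := hfar
      _ = |Alg (ε * M₁ * (s - s)) - ε * M₁ * (s - (s - Δ))| := by ring_nf

/-- One-point minimax lower bound: for any estimator `Alg` of `φ(s-Δ)` from the single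
value `φ(s)`, there is a `C¹` function `φ` with `|φ'| ≤ M₁` everywhere on which the
estimator errs by at least `M₁·Δ`. -/
theorem one_point_lower_bound
    (Δ M₁ s : ℝ) (hΔ : 0 < Δ) (hM₁ : 0 < M₁)
    (Alg : ℝ → ℝ) :
    ∃ φ : ℝ → ℝ, ContDiff ℝ 1 φ ∧ (∀ u : ℝ, |deriv φ u| ≤ M₁) ∧
      M₁ * Δ ≤ |Alg (φ s) - φ (s - Δ)| :=
  one_point_lower_bound_general Δ M₁ s hM₁ Alg
end

section
/- Let j ≥ 1 be a natural number, Δ > 0, M₂ ≥ 0, s ∈ ℝ, and let φ : ℝ → E be twice continuously differentiable on the interval [s − jΔ, s + Δ] with values in a real normed vector space E, with ‖φ''(u)‖ ≤ M₂ for all u ∈ [s − jΔ, s + Δ]. Then ‖(j+1)·φ(s) − j·φ(s+Δ) − φ(s − jΔ)‖ ≤ (1/2)·j·(j+1)·M₂·Δ². -/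
open Set

lemma taylor1_aux {E : Type*} [NormedAddCommGroup E] [NormedSpace ℝ E]
    {a b M : ℝ} (hab : a ≤ b) {f f' f'' : ℝ → E}
    (h1 : ∀ u ∈ Icc a b, HasDerivAt f (f' u) u)
    (h2 : ∀ u ∈ Icc a b, HasDerivAt f' (f'' u) u)
    (hM : ∀ u ∈ Icc a b, ‖f'' u‖ ≤ M) :
    ‖f b - f a - (b - a) • f' a‖ ≤ M * (b - a) ^ 2 / 2 := by
  -- MVT for f' : ‖f' x - f' a‖ ≤ M * (x - a)
  have hmvt : ∀ x ∈ Icc a b, ‖f' x - f' a‖ ≤ M * (x - a) :=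
    norm_image_sub_le_of_norm_deriv_le_segment'
      (fun x hx => (h2 x hx).hasDerivWithinAt) (fun x hx => hM x ⟨hx.1, hx.2.le⟩)
  set g : ℝ → E := fun y => f y - f a - (y - a) • f' a with hg
  have hg' : ∀ x ∈ Icc a b, HasDerivAt g (f' x - f' a) x := by
    intro x hx
    have : HasDerivAt (fun y : ℝ => (y - a) • f' a) ((1 : ℝ) • f' a) x :=
      ((hasDerivAt_id x).sub_const a).smul_const (f' a)
    exact (((h1 x hx).sub_const (f a)).sub this).congr_deriv (by rw [one_smul])
  have hB : ∀ x : ℝ, HasDerivAt (fun y => M * (y - a) ^ 2 / 2) (M * (x - a)) x := by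
    intro x
    have : HasDerivAt (fun y : ℝ => (y - a) ^ 2) (2 * (x - a) ^ 1 * 1) x :=
      ((hasDerivAt_id x).sub_const a).pow 2
    have h2' := (this.const_mul M).div_const 2
    exact h2'.congr_deriv (by ring)
  have key := image_norm_le_of_norm_deriv_right_le_deriv_boundary
    (f := g) (f' := fun x => f' x - f' a) (a := a) (b := b)
    (fun x hx => ((hg' x hx).continuousAt).continuousWithinAt)
    (fun x hx => (hg' x ⟨hx.1, hx.2.le⟩).hasDerivWithinAt)
    (by simp [hg]) hB
    (fun x hx => hmvt x ⟨hx.1, hx.2.le⟩)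
    (right_mem_Icc.2 hab)
  simpa [hg] using key

lemma taylor1_aux' {E : Type*} [NormedAddCommGroup E] [NormedSpace ℝ E]
    {a b M : ℝ} (hab : a ≤ b) {f f' f'' : ℝ → E}
    (h1 : ∀ u ∈ Icc a b, HasDerivAt f (f' u) u)
    (h2 : ∀ u ∈ Icc a b, HasDerivAt f' (f'' u) u)
    (hM : ∀ u ∈ Icc a b, ‖f'' u‖ ≤ M) :
    ‖f a - f b - (a - b) • f' b‖ ≤ M * (b - a) ^ 2 / 2 := by
  -- reflect: F y = f (a + b - y)
  have hmem : ∀ y ∈ Icc a b, a + b - y ∈ Icc a b := by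
    intro y hy; exact ⟨by linarith [hy.2], by linarith [hy.1]⟩
  have hr : ∀ y : ℝ, HasDerivAt (fun y : ℝ => a + b - y) (-1 : ℝ) y := by
    intro y
    simpa using (hasDerivAt_id y).const_sub (a + b)
  have H1 : ∀ u ∈ Icc a b, HasDerivAt (fun y => f (a + b - y))
      ((-1 : ℝ) • f' (a + b - u)) u := by
    intro u hu
    exact (h1 _ (hmem u hu)).scomp u (hr u)
  have H2 : ∀ u ∈ Icc a b, HasDerivAt (fun y => (-1 : ℝ) • f' (a + b - y))
      (f'' (a + b - u)) u := by
    intro u hu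
    have := ((h2 _ (hmem u hu)).scomp u (hr u)).const_smul (-1 : ℝ)
    exact this.congr_deriv (by simp)
  have HM : ∀ u ∈ Icc a b, ‖f'' (a + b - u)‖ ≤ M := fun u hu => hM _ (hmem u hu)
  have key := taylor1_aux hab H1 H2 HM
  have e1 : a + b - b = a := by ring
  have e2 : a + b - a = b := by ring
  rw [e1, e2] at key
  have : f a - f b - (a - b) • f' b = f (a+b-b) - f (a+b-a) - (b - a) • ((-1:ℝ) • f' b) := by
    rw [e1, e2]; rw [smul_smul]; ring_nf
  calc ‖f a - f b - (a - b) • f' b‖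
      = ‖f a - f b - (b - a) • ((-1:ℝ) • f' b)‖ := by
        rw [smul_smul]; ring_nf
    _ ≤ M * (b - a) ^ 2 / 2 := key

/-- Bias bound for two-point linear extrapolation at a single anchor (strategy A): the
estimator `(j+1)·φ(s) - j·φ(s+Δ)` of `φ(s - jΔ)` has bias at most
`(1/2)·j·(j+1)·M₂·Δ²` for any function twice continuously differentiable on
`[s - jΔ, s + Δ]` with second derivative bounded in norm by `M₂`. -/
theorem linear_extrapolation_bias_bound
    {E : Type*} [NormedAddCommGroup E] [NormedSpace ℝ E]
    (j : ℕ) (hj : 1 ≤ j) (Δ M₂ s : ℝ) (hΔ : 0 < Δ) (hM₂ : 0 ≤ M₂)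
    (φ φ' φ'' : ℝ → E)
    (hφ' : ∀ u ∈ Icc (s - j * Δ) (s + Δ), HasDerivAt φ (φ' u) u)
    (hφ'' : ∀ u ∈ Icc (s - j * Δ) (s + Δ), HasDerivAt φ' (φ'' u) u)
    (hcont : ContinuousOn φ'' (Icc (s - j * Δ) (s + Δ)))
    (hbound : ∀ u ∈ Icc (s - j * Δ) (s + Δ), ‖φ'' u‖ ≤ M₂) :
    ‖((j : ℝ) + 1) • φ s - (j : ℝ) • φ (s + Δ) - φ (s - j * Δ)‖ ≤
      (1 / 2) * j * ((j : ℝ) + 1) * M₂ * Δ ^ 2 := by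
  have hj1 : (1 : ℝ) ≤ j := by exact_mod_cast hj
  have hjd : Δ ≤ (j : ℝ) * Δ := by nlinarith
  -- subinterval inclusions
  have hsub1 : Icc s (s + Δ) ⊆ Icc (s - j * Δ) (s + Δ) :=
    Icc_subset_Icc (by linarith [mul_pos (by linarith : (0:ℝ) < j) hΔ]) le_rfl
  have hsub2 : Icc (s - j * Δ) s ⊆ Icc (s - j * Δ) (s + Δ) :=
    Icc_subset_Icc le_rfl (by linarith)
  -- right Taylor bound on [s, s+Δ]
  have hR := taylor1_aux (a := s) (b := s + Δ) (by linarith)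
    (fun u hu => hφ' u (hsub1 hu)) (fun u hu => hφ'' u (hsub1 hu))
    (fun u hu => hbound u (hsub1 hu))
  -- left Taylor bound on [s - jΔ, s]
  have hL := taylor1_aux' (a := s - j * Δ) (b := s)
    (by linarith [mul_pos (by linarith : (0:ℝ) < j) hΔ])
    (fun u hu => hφ' u (hsub2 hu)) (fun u hu => hφ'' u (hsub2 hu))
    (fun u hu => hbound u (hsub2 hu))
  -- decompose
  have decomp : ((j : ℝ) + 1) • φ s - (j : ℝ) • φ (s + Δ) - φ (s - j * Δ) =
      -((j : ℝ) • (φ (s + Δ) - φ s - (s + Δ - s) • φ' s))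
      - (φ (s - j * Δ) - φ s - (s - j * Δ - s) • φ' s) := by
    have e1 : s + Δ - s = Δ := by ring
    have e2 : s - (j:ℝ) * Δ - s = -((j:ℝ) * Δ) := by ring
    rw [e1, e2]
    module
  rw [decomp]
  have h1 : ‖(j : ℝ) • (φ (s + Δ) - φ s - (s + Δ - s) • φ' s)‖
      ≤ (j : ℝ) * (M₂ * Δ ^ 2 / 2) := by
    rw [norm_smul, Real.norm_eq_abs, abs_of_nonneg (by positivity)]
    have : s + Δ - s = Δ := by ring
    rw [this] at hR ⊢
    exact mul_le_mul_of_nonneg_left (by simpa using hR) (by positivity)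
  have h2 : ‖φ (s - j * Δ) - φ s - (s - j * Δ - s) • φ' s‖
      ≤ M₂ * ((j : ℝ) * Δ) ^ 2 / 2 := by
    have : s - (s - (j:ℝ) * Δ) = (j:ℝ) * Δ := by ring
    calc ‖φ (s - j * Δ) - φ s - (s - j * Δ - s) • φ' s‖
        ≤ M₂ * (s - (s - (j:ℝ) * Δ)) ^ 2 / 2 := hL
      _ = M₂ * ((j : ℝ) * Δ) ^ 2 / 2 := by rw [this]
  calc ‖-((j : ℝ) • (φ (s + Δ) - φ s - (s + Δ - s) • φ' s))
        - (φ (s - j * Δ) - φ s - (s - j * Δ - s) • φ' s)‖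
      ≤ ‖-((j : ℝ) • (φ (s + Δ) - φ s - (s + Δ - s) • φ' s))‖
        + ‖φ (s - j * Δ) - φ s - (s - j * Δ - s) • φ' s‖ := norm_sub_le _ _
    _ ≤ (j : ℝ) * (M₂ * Δ ^ 2 / 2) + M₂ * ((j : ℝ) * Δ) ^ 2 / 2 := by
        rw [norm_neg]; exact add_le_add h1 h2
    _ = (1 / 2) * j * ((j : ℝ) + 1) * M₂ * Δ ^ 2 := by ring
end

section
/- Let φ : ℝ → ℝ be twice differentiable at a point s ∈ ℝ and fix a natural number j ≥ 1. Then ((j+1)·φ(s) − j·φ(s+Δ) − φ(s − jΔ)) / Δ² tends to −(1/2)·j·(j+1)·φ''(s) as Δ → 0 (Δ ≠ 0). -/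
open Filter Topology

/-- Leading-order bias of two-point linear extrapolation (strategy A): if `φ` is twice
differentiable at `s`, then `((j+1)·φ(s) - j·φ(s+Δ) - φ(s - jΔ))/Δ²` tends to
`-(1/2)·j·(j+1)·φ''(s)` as `Δ → 0`. -/
theorem linear_extrapolation_bias_leading_order
    (φ : ℝ → ℝ) (s : ℝ) (j : ℕ) (hj : 1 ≤ j)
    (hφ : ∀ᶠ x in 𝓝 s, DifferentiableAt ℝ φ x)
    (hφ'' : DifferentiableAt ℝ (deriv φ) s) :
    Tendsto
      (fun Δ : ℝ =>
        (((j : ℝ) + 1) * φ s - (j : ℝ) * φ (s + Δ) - φ (s - j * Δ)) / Δ ^ 2)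
      (𝓝[≠] 0)
      (𝓝 (-(1 / 2) * j * ((j : ℝ) + 1) * deriv (deriv φ) s)) := by
  set J : ℝ := (j : ℝ) with hJ
  set L : ℝ := deriv (deriv φ) s with hL
  set f : ℝ → ℝ := fun Δ => (J + 1) * φ s - J * φ (s + Δ) - φ (s - J * Δ) with hf
  set f' : ℝ → ℝ := fun Δ => -J * deriv φ (s + Δ) + J * deriv φ (s - J * Δ) with hf'
  have hcont : ContinuousAt φ s := (hφ.self_of_nhds).continuousAt
  have t1 : Tendsto (fun Δ : ℝ => s + Δ) (𝓝 0) (𝓝 s) :=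
    (continuous_const.add continuous_id).tendsto' 0 s (by simp)
  have t2 : Tendsto (fun Δ : ℝ => s - J * Δ) (𝓝 0) (𝓝 s) :=
    (continuous_const.sub (continuous_const.mul continuous_id)).tendsto' 0 s (by simp)
  have hev : ∀ᶠ Δ in 𝓝 (0 : ℝ),
      DifferentiableAt ℝ φ (s + Δ) ∧ DifferentiableAt ℝ φ (s - J * Δ) :=
    (t1.eventually hφ).and (t2.eventually hφ)
  have hff' : ∀ᶠ Δ in 𝓝[≠] (0 : ℝ), HasDerivAt f (f' Δ) Δ := by
    apply eventually_nhdsWithin_of_eventually_nhds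
    filter_upwards [hev] with Δ hΔ
    have h1 : HasDerivAt (fun Δ : ℝ => φ (s + Δ)) (deriv φ (s + Δ) * 1) Δ :=
      HasDerivAt.comp Δ hΔ.1.hasDerivAt ((hasDerivAt_id Δ).const_add s)
    have hin : HasDerivAt (fun Δ : ℝ => s - J * Δ) (-J) Δ := by
      simpa using (((hasDerivAt_id Δ).const_mul J).const_sub s)
    have h2 : HasDerivAt (fun Δ : ℝ => φ (s - J * Δ)) (deriv φ (s - J * Δ) * (-J)) Δ :=
      HasDerivAt.comp Δ hΔ.2.hasDerivAt hin
    have h3 := ((h1.const_mul J).const_sub ((J + 1) * φ s)).sub h2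
    convert h3 using 1
    · rfl
    · rfl
    · rfl
    simp [hf']
    ring
  have hgg' : ∀ᶠ Δ in 𝓝[≠] (0 : ℝ), HasDerivAt (fun Δ : ℝ => Δ ^ 2) (2 * Δ) Δ := by
    filter_upwards with Δ
    simpa using (hasDerivAt_pow 2 Δ)
  have hg' : ∀ᶠ Δ in 𝓝[≠] (0 : ℝ), (2 : ℝ) * Δ ≠ 0 := by
    filter_upwards [self_mem_nhdsWithin] with Δ (hΔ : Δ ≠ 0)
    exact mul_ne_zero two_ne_zero hΔ
  have hf0 : Tendsto f (𝓝[≠] 0) (𝓝 0) := by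
    apply tendsto_nhdsWithin_of_tendsto_nhds
    have h1 : Tendsto (fun Δ : ℝ => φ (s + Δ)) (𝓝 0) (𝓝 (φ s)) := hcont.tendsto.comp t1
    have h2 : Tendsto (fun Δ : ℝ => φ (s - J * Δ)) (𝓝 0) (𝓝 (φ s)) := hcont.tendsto.comp t2
    have h3 : Tendsto f (𝓝 0) (𝓝 ((J + 1) * φ s - J * φ s - φ s)) :=
      (tendsto_const_nhds.sub (h1.const_mul J)).sub h2
    convert h3 using 2
    ring
  have hg0 : Tendsto (fun Δ : ℝ => Δ ^ 2) (𝓝[≠] (0 : ℝ)) (𝓝 0) := by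
    apply tendsto_nhdsWithin_of_tendsto_nhds
    exact (continuous_pow 2).tendsto' 0 0 (by simp)
  have hF : HasDerivAt f' (-(J * (J + 1)) * L) 0 := by
    have e1 : HasDerivAt (deriv φ) L (s + (0:ℝ)) := by rw [add_zero]; exact hφ''.hasDerivAt
    have h1 : HasDerivAt (fun Δ : ℝ => deriv φ (s + Δ)) (L * 1) 0 :=
      HasDerivAt.comp 0 e1 ((hasDerivAt_id (0:ℝ)).const_add s)
    have hin : HasDerivAt (fun Δ : ℝ => s - J * Δ) (-J) (0 : ℝ) := by
      simpa using (((hasDerivAt_id (0 : ℝ)).const_mul J).const_sub s)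
    have e2 : HasDerivAt (deriv φ) L (s - J * (0:ℝ)) := by
      rw [mul_zero, sub_zero]; exact hφ''.hasDerivAt
    have h2 : HasDerivAt (fun Δ : ℝ => deriv φ (s - J * Δ)) (L * (-J)) 0 :=
      HasDerivAt.comp (h₂ := deriv φ) 0 e2 hin
    have h3 := (h1.const_mul (-J)).add (h2.const_mul J)
    convert h3 using 1
    · rfl
    · rfl
    · rfl
    ring
  have hf'0 : f' 0 = 0 := by simp [hf']
  have hslope : Tendsto (fun Δ : ℝ => f' Δ / Δ) (𝓝[≠] 0) (𝓝 (-(J * (J + 1)) * L)) := by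
    have h := hasDerivAt_iff_tendsto_slope.mp hF
    refine h.congr fun Δ => ?_
    simp [slope_def_field, hf'0]
  have hdiv : Tendsto (fun Δ : ℝ => f' Δ / (2 * Δ)) (𝓝[≠] (0:ℝ))
      (𝓝 (-(1 / 2) * J * (J + 1) * L)) := by
    have h := hslope.div_const 2
    have heq : (fun Δ : ℝ => f' Δ / Δ / 2) = fun Δ : ℝ => f' Δ / (2 * Δ) := by
      funext Δ; rw [div_div]; ring_nf
    rw [heq] at h
    convert h using 2
    ring
  exact HasDerivAt.lhopital_zero_nhdsNE hff' hgg' hg' hf0 hg0 hdiv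
end

section
/- Let k ∈ ℕ, Δ > 0, M₁ ≥ 0, M₂ ≥ 0, s ∈ ℝ, and let φ : ℝ → E be twice continuously differentiable on the interval [s − (2k+1)Δ, s + Δ] with values in a real normed vector space E, with ‖φ'(u)‖ ≤ M₁ and ‖φ''(u)‖ ≤ M₂ for all u in that interval. Then ‖2·φ(s) − φ(s+Δ) − φ(s − (2k+1)Δ)‖ ≤ 2k·M₁·Δ + (2k² + 2k + 1)·M₂·Δ². -/
open Set

/-- Second-order Taylor bound with explicit `1/2` factor, both directions. -/
lemma taylor2_bound
    {E : Type*} [NormedAddCommGroup E] [NormedSpace ℝ E]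
    {a b x y M : ℝ} (hx : x ∈ Icc a b) (hy : y ∈ Icc a b)
    (φ φ' φ'' : ℝ → E)
    (hd1 : ∀ u ∈ Icc a b, HasDerivAt φ (φ' u) u)
    (hd2 : ∀ u ∈ Icc a b, HasDerivAt φ' (φ'' u) u)
    (hM : ∀ u ∈ Icc a b, ‖φ'' u‖ ≤ M) :
    ‖φ y - φ x - (y - x) • φ' x‖ ≤ M / 2 * (y - x) ^ 2 := by
  have hconv : Convex ℝ (Icc a b) := convex_Icc a b
  -- φ' is M-Lipschitz on Icc a b
  have hLip : ∀ u ∈ Icc a b, ‖φ' u - φ' x‖ ≤ M * ‖u - x‖ := fun u hu =>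
    hconv.norm_image_sub_le_of_norm_hasDerivWithin_le
      (fun v hv => (hd2 v hv).hasDerivWithinAt) hM hx hu
  set c : ℝ := y - x with hc
  have hmem : ∀ t ∈ Icc (0 : ℝ) 1, x + t * c ∈ Icc a b := by
    intro t ht
    have h := hconv hx hy (by linarith [ht.2] : (0:ℝ) ≤ 1 - t) ht.1 (by ring)
    have he : (1 - t) • x + t • y = x + t * c := by
      simp only [smul_eq_mul, hc]; ring
    rwa [he] at h
  set f : ℝ → E := fun t => φ (x + t * c) - φ x - (t * c) • φ' x with hf
  set f' : ℝ → E := fun t => c • (φ' (x + t * c) - φ' x) with hf'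
  have hderiv : ∀ t ∈ Icc (0 : ℝ) 1, HasDerivAt f (f' t) t := by
    intro t ht
    have h1 : HasDerivAt (fun t : ℝ => x + t * c) c t := by
      simpa using ((hasDerivAt_id t).mul_const c).const_add x
    have h2 : HasDerivAt (fun t => φ (x + t * c)) (c • φ' (x + t * c)) t :=
      (hd1 _ (hmem t ht)).scomp t h1
    have h3 : HasDerivAt (fun t : ℝ => (t * c) • φ' x) (c • φ' x) t := by
      simpa [smul_smul] using ((hasDerivAt_id t).mul_const c).smul_const (φ' x)
    simpa [hf, hf', smul_sub, Pi.sub_def] using (h2.sub_const (φ x)).sub h3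
  have key : ∀ t ∈ Icc (0 : ℝ) 1, ‖f t‖ ≤ M * c ^ 2 / 2 * t ^ 2 := by
    intro t ht
    refine image_norm_le_of_norm_deriv_right_le_deriv_boundary
      (f' := f') (B := fun t => M * c ^ 2 / 2 * t ^ 2) (B' := fun t => M * c ^ 2 * t) ?_ ?_ ?_ ?_ ?_ ht
    · exact fun t ht => ((hderiv t ht).continuousAt).continuousWithinAt
    · exact fun t ht => ((hderiv t (Ico_subset_Icc_self ht)).hasDerivWithinAt)
    · simp [hf]
    · intro t
      have : HasDerivAt (fun t : ℝ => M * c ^ 2 / 2 * t ^ 2) (M * c ^ 2 / 2 * (2 * t)) t := by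
        simpa using (hasDerivAt_pow 2 t).const_mul (M * c ^ 2 / 2)
      convert this using 1; ring
    · intro t ht
      have ht0 : (0 : ℝ) ≤ t := ht.1
      have hb := hLip _ (hmem t (Ico_subset_Icc_self ht))
      have : ‖f' t‖ ≤ |c| * (M * ‖x + t * c - x‖) := by
        rw [hf', norm_smul, Real.norm_eq_abs]
        exact mul_le_mul_of_nonneg_left (by simpa using hb) (abs_nonneg c)
      calc ‖f' t‖ ≤ |c| * (M * ‖x + t * c - x‖) := this
        _ = M * c ^ 2 * t := by
            rw [show x + t * c - x = t * c by ring, Real.norm_eq_abs, abs_mul,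
              abs_of_nonneg ht0]
            rw [show |c| * (M * (t * |c|)) = M * (|c| * |c|) * t by ring, abs_mul_abs_self]
            ring
  have h1 := key 1 (by norm_num)
  have hxy : x + 1 * c = y := by rw [hc]; ring
  have hval : M * c ^ 2 / 2 * (1 : ℝ) ^ 2 = M / 2 * (y - x) ^ 2 := by rw [hc]; ring
  rw [hval] at h1
  simp only [hf] at h1
  rw [hxy, one_mul, hc] at h1
  exact h1

/-- Bias bound for the odd steps of the interleaved (ZEUS) scheme (strategy B): at odd
offsets `j = 2k+1`, the fixed second-order extrapolate `2·φ(s) - φ(s+Δ)` deviates from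
the true value `φ(s - (2k+1)Δ)` by at most `2k·M₁·Δ + (2k² + 2k + 1)·M₂·Δ²`, for any
function twice continuously differentiable on `[s - (2k+1)Δ, s + Δ]` with first and
second derivatives bounded in norm by `M₁` and `M₂` respectively. -/
theorem interleaved_odd_step_bias_bound
    {E : Type*} [NormedAddCommGroup E] [NormedSpace ℝ E]
    (k : ℕ) (Δ M₁ M₂ s : ℝ) (hΔ : 0 < Δ) (hM₁ : 0 ≤ M₁) (hM₂ : 0 ≤ M₂)
    (φ φ' φ'' : ℝ → E)
    (hφ' : ∀ u ∈ Icc (s - (2 * k + 1) * Δ) (s + Δ), HasDerivAt φ (φ' u) u)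
    (hφ'' : ∀ u ∈ Icc (s - (2 * k + 1) * Δ) (s + Δ), HasDerivAt φ' (φ'' u) u)
    (hcont : ContinuousOn φ'' (Icc (s - (2 * k + 1) * Δ) (s + Δ)))
    (hbound1 : ∀ u ∈ Icc (s - (2 * k + 1) * Δ) (s + Δ), ‖φ' u‖ ≤ M₁)
    (hbound2 : ∀ u ∈ Icc (s - (2 * k + 1) * Δ) (s + Δ), ‖φ'' u‖ ≤ M₂) :
    ‖(2 : ℝ) • φ s - φ (s + Δ) - φ (s - (2 * k + 1) * Δ)‖ ≤
      2 * k * M₁ * Δ + (2 * (k : ℝ) ^ 2 + 2 * k + 1) * M₂ * Δ ^ 2 := by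
  set a : ℝ := s - (2 * k + 1) * Δ with ha
  have hkΔ : 0 ≤ (2 * (k : ℝ) + 1) * Δ := by positivity
  have hs_mem : s ∈ Icc a (s + Δ) := ⟨by simp [ha]; linarith, by linarith⟩
  have hb_mem : s + Δ ∈ Icc a (s + Δ) := ⟨by simp [ha]; linarith, le_refl _⟩
  have ha_mem : a ∈ Icc a (s + Δ) := ⟨le_refl _, by simp [ha]; linarith⟩
  have R1 := taylor2_bound hs_mem hb_mem φ φ' φ'' hφ' hφ'' hbound2
  have R2 := taylor2_bound hs_mem ha_mem φ φ' φ'' hφ' hφ'' hbound2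
  have hφ's := hbound1 s hs_mem
  have hid : (2 : ℝ) • φ s - φ (s + Δ) - φ a =
      -(φ (s + Δ) - φ s - (s + Δ - s) • φ' s) - (φ a - φ s - (a - s) • φ' s)
        + ((2 * (k : ℝ)) * Δ) • φ' s := by
    have h2 : ((2 * (k : ℝ)) * Δ) • φ' s = -((s + Δ - s) • φ' s) - (a - s) • φ' s := by
      rw [← neg_smul, ← sub_smul]
      congr 1
      rw [ha]; ring
    rw [h2]
    have : (2 : ℝ) • φ s = φ s + φ s := by
      rw [two_smul]
    rw [this]; abel
  rw [hid]
  have hn1 : ‖(s + Δ - s) • φ' s‖ = Δ * ‖φ' s‖ := by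
    rw [norm_smul, Real.norm_eq_abs]
    congr 1
    rw [show s + Δ - s = Δ by ring, abs_of_pos hΔ]
  calc ‖-(φ (s + Δ) - φ s - (s + Δ - s) • φ' s) - (φ a - φ s - (a - s) • φ' s)
        + ((2 * (k : ℝ)) * Δ) • φ' s‖
      ≤ ‖φ (s + Δ) - φ s - (s + Δ - s) • φ' s‖ + ‖φ a - φ s - (a - s) • φ' s‖
        + ‖((2 * (k : ℝ)) * Δ) • φ' s‖ := by
        refine (norm_add_le _ _).trans ?_
        gcongr
        refine (norm_sub_le _ _).trans ?_
        rw [norm_neg]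
    _ ≤ M₂ / 2 * (s + Δ - s) ^ 2 + M₂ / 2 * (a - s) ^ 2 + (2 * (k : ℝ) * Δ) * M₁ := by
        gcongr
        rw [norm_smul, Real.norm_eq_abs, abs_of_nonneg (by positivity)]
        exact mul_le_mul_of_nonneg_left hφ's (by positivity)
    _ = 2 * k * M₁ * Δ + (2 * (k : ℝ) ^ 2 + 2 * k + 1) * M₂ * Δ ^ 2 := by
        rw [show s + Δ - s = Δ by ring, show a - s = -((2 * (k : ℝ) + 1) * Δ) by rw [ha]; ring]
        ring
end
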